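/- Let σ be the permutation produced by the Deodhar maximal lift procedure with inputs p ≤ n, a p-element subset Y of [n], and w ∈ S_n with Y ≤ {w_1,...,w_p}. Then for i ≠ p with w_i > w_{i+1}, we have σ_i > σ_{i+1}. In other words, Des(w) \ {p} ⊆ Des(σ), where Des(η) = {1 ≤ i ≤ n-1 : η_i > η_{i+1}}. -/

import Mathlib

/-- Dominance order on equal-cardinality finite sets of naturals:
the i-th smallest element of `E` is at most the i-th smallest element of `F`. -/
def Dom (E F : Finset ℕ) : Prop :=
  List.Forall₂ (· ≤ ·) (Finset.sort E (· ≤ ·)) (Finset.sort F (· ≤ ·))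

/-- The k-th smallest element of `E` (1-based), with junk value 0 out of range. -/
def nth (E : Finset ℕ) (k : ℕ) : ℕ := (Finset.sort E (· ≤ ·)).getD (k - 1) 0

/-- The (0-based) level of `e` in `E`: its index in the increasing enumeration. -/
def level (e : ℕ) (E : Finset ℕ) : ℕ := List.idxOf e (Finset.sort E (· ≤ ·))

/-- The Bruhat order, via the tableau criterion, on permutations of `[n] = {1,...,n}`
given in one-line notation as functions `ℕ → ℕ`. -/
def Bruhat (n : ℕ) (v w : ℕ → ℕ) : Prop :=
  ∀ i ≤ n, Dom ((Finset.Icc 1 i).image v) ((Finset.Icc 1 i).image w)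

/-!
Before p: σ_{i+1} is still unused when σ_i is chosen, and σ_{i+1} ≤ w_{i+1} < w_i, so σ_{i+1} is a
candidate for the maximum σ_i.

After p, write A_j = {w_1,…,w_j} and B_j = {σ_1,…,σ_j}, and compare sets by counting their
elements below each threshold. The Gale inequality B_j ≤ A_j holds at j = p and is preserved by
the subroutine. If σ_j = α is the q-th element of A_j, then w_j ≤ α and fewer than q elements of
B_{j-1} lie below α. So when w_{j+1} < w_j, the set A_{j+1} has q elements below α while B_j has
fewer than q: the next step violates at q, chooses an index q' ≤ q, and σ_{j+1}, the q'-th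
element of A_{j+1}, lies below α.
-/

open Finset

lemma nth_eq_getElem {E : Finset ℕ} {k : ℕ} (hk1 : 1 ≤ k) (hk : k ≤ #E) :
    nth E k = (E.sort (· ≤ ·))[k - 1]'(by rw [length_sort]; omega) :=
  List.getD_eq_getElem _ _ _

lemma nth_mem {E : Finset ℕ} {k : ℕ} (hk1 : 1 ≤ k) (hk : k ≤ #E) : nth E k ∈ E := by
  rw [nth_eq_getElem hk1 hk, ← mem_sort (· ≤ ·)]
  exact List.getElem_mem _

lemma nth_strictMonoOn (E : Finset ℕ) : StrictMonoOn (nth E) (Set.Icc 1 #E) := by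
  rintro k ⟨hk1, hk⟩ k' ⟨hk1', hk'⟩ hkk'
  rw [nth_eq_getElem hk1 hk, nth_eq_getElem hk1' hk']
  exact (sortedLT_sort E).strictMono_get
    (show (⟨k - 1, _⟩ : Fin _) < ⟨k' - 1, _⟩ by simp only [Fin.mk_lt_mk]; omega)

lemma exists_nth_eq {E : Finset ℕ} {x : ℕ} (hx : x ∈ E) :
    ∃ k, 1 ≤ k ∧ k ≤ #E ∧ nth E k = x := by
  obtain ⟨i, hi, rfl⟩ := List.getElem_of_mem ((mem_sort (· ≤ ·)).2 hx)
  rw [length_sort] at hi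
  exact ⟨i + 1, by omega, by omega, nth_eq_getElem (by omega) (by omega)⟩

lemma nth_lt_iff {E : Finset ℕ} {k : ℕ} (hk1 : 1 ≤ k) (hk : k ≤ #E) (a : ℕ) :
    nth E k < a ↔ k ≤ #{x ∈ E | x < a} := by
  have hmono := nth_strictMonoOn E
  constructor
  · intro h
    calc k = #((Icc 1 k).image (nth E)) := by
          rw [card_image_of_injOn (hmono.injOn.mono ?_), Nat.card_Icc, Nat.add_sub_cancel]
          intro r hr
          simp only [coe_Icc, Set.mem_Icc] at hr ⊢
          omega
      _ ≤ #{x ∈ E | x < a} := by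
          refine card_le_card fun x hx => ?_
          obtain ⟨r, hr, rfl⟩ := mem_image.1 hx
          rw [mem_Icc] at hr
          refine mem_filter.2 ⟨nth_mem hr.1 (by omega), lt_of_le_of_lt ?_ h⟩
          exact (hmono.le_iff_le ⟨hr.1, by omega⟩ ⟨hk1, hk⟩).2 hr.2
  · intro h
    by_contra! hle
    have : {x ∈ E | x < a} ⊆ (Icc 1 (k - 1)).image (nth E) := by
      intro x hx
      obtain ⟨hxE, hxa⟩ := mem_filter.1 hx
      obtain ⟨r, hr1, hr, rfl⟩ := exists_nth_eq hxE
      refine mem_image.2 ⟨r, mem_Icc.2 ⟨hr1, ?_⟩, rfl⟩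
      by_contra! hkr
      exact absurd ((hmono.le_iff_le ⟨hk1, hk⟩ ⟨hr1, hr⟩).2 (by omega)) (by omega)
    have := (card_le_card this).trans card_image_le
    simp only [Nat.card_Icc] at this
    omega

lemma card_filter_lt_nth {E : Finset ℕ} {k : ℕ} (hk1 : 1 ≤ k) (hk : k ≤ #E) :
    #{x ∈ E | x < nth E k} = k - 1 := by
  have hlt : #{x ∈ E | x < nth E k} < k :=
    not_le.1 fun h => lt_irrefl _ ((nth_lt_iff hk1 hk _).2 h)
  rcases Nat.eq_or_lt_of_le hk1 with rfl | hk1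
  · omega
  · have := (nth_lt_iff (k := k - 1) (by omega) (by omega) (nth E k)).1
      (nth_strictMonoOn E ⟨by omega, by omega⟩ ⟨by omega, hk⟩ (by omega))
    omega

lemma card_filter_lt_insert_of_lt {E : Finset ℕ} {b a : ℕ} (hb : b ∉ E) (hba : b < a) :
    #{x ∈ insert b E | x < a} = #{x ∈ E | x < a} + 1 := by
  rw [filter_insert, if_pos hba, card_insert_of_notMem (fun h => hb (mem_filter.1 h).1)]

lemma card_filter_lt_insert_of_le {E : Finset ℕ} {b a : ℕ} (hab : a ≤ b) :
    #{x ∈ insert b E | x < a} = #{x ∈ E | x < a} := by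
  rw [filter_insert, if_neg (not_lt.2 hab)]

/-- `B ≤ A` componentwise on increasing enumerations (when `#B = #A`), stated by counting the
elements below each threshold. -/
def GaleLE (B A : Finset ℕ) : Prop := ∀ a, #{x ∈ A | x < a} ≤ #{x ∈ B | x < a}

lemma Dom.card_eq {E F : Finset ℕ} (h : Dom E F) : #E = #F := by
  simpa only [length_sort] using h.length_eq

lemma Dom.nth_le {E F : Finset ℕ} (h : Dom E F) {k : ℕ} (hk1 : 1 ≤ k) (hk : k ≤ #E) :
    nth E k ≤ nth F k := by
  rw [nth_eq_getElem hk1 hk, nth_eq_getElem hk1 (h.card_eq ▸ hk)]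
  exact List.forall₂_iff_get.1 h |>.2 _ _ _

lemma Dom.galeLE {E F : Finset ℕ} (h : Dom E F) : GaleLE E F := by
  intro a
  set c := #{x ∈ F | x < a}
  rcases Nat.eq_zero_or_pos c with hc | hc
  · omega
  have hcF : c ≤ #F := card_filter_le _ _
  have hcE : c ≤ #E := h.card_eq ▸ hcF
  exact (nth_lt_iff hc hcE a).1 ((h.nth_le hc hcE).trans_lt ((nth_lt_iff hc hcF a).2 le_rfl))

/-- `q` is the index chosen by the subroutine on inputs `A`, `B`, `γ`; its output is
`nth (insert γ A) q`. -/
structure IsLiftIndex (A B : Finset ℕ) (γ q : ℕ) : Prop where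
  notMem : γ ∉ A
  card_eq : #B = #A
  one_le : 1 ≤ q
  le_card_succ : q ≤ #A + 1
  lt_nth : q ≤ #A → nth (insert γ A) q < nth B q
  nth_le : ∀ r, 1 ≤ r → r < q → nth B r ≤ nth (insert γ A) r

namespace IsLiftIndex

variable {A B : Finset ℕ} {γ q : ℕ}

lemma le_card_insert (h : IsLiftIndex A B γ q) : q ≤ #(insert γ A) := by
  rw [card_insert_of_notMem h.notMem]
  exact h.le_card_succ

lemma le_nth (h : IsLiftIndex A B γ q) (hdom : GaleLE B A) : γ ≤ nth (insert γ A) q := by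
  set α := nth (insert γ A) q
  by_contra! hαγ
  have hqA : q ≤ #{x ∈ A | x < α + 1} := by
    rw [← card_filter_lt_insert_of_le hαγ]
    exact (nth_lt_iff h.one_le h.le_card_insert _).1 (Nat.lt_succ_self α)
  have hqA' : q ≤ #A := hqA.trans (card_filter_le _ _)
  have hqB : nth B q < α + 1 :=
    (nth_lt_iff h.one_le (h.card_eq ▸ hqA') _).2 (hqA.trans (hdom _))
  have := h.lt_nth hqA'
  omega

lemma card_filter_lt_nth_lt (h : IsLiftIndex A B γ q) :
    #{x ∈ B | x < nth (insert γ A) q} < q := by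
  by_cases hq : q ≤ #A
  · exact not_le.1 fun hle => (h.lt_nth hq).not_gt
      ((nth_lt_iff h.one_le (h.card_eq ▸ hq) _).2 hle)
  · have := card_filter_le B (· < nth (insert γ A) q)
    have := h.card_eq
    omega

lemma nth_notMem (h : IsLiftIndex A B γ q) : nth (insert γ A) q ∉ B := by
  intro hmem
  obtain ⟨k, hk1, hkB, hk⟩ := exists_nth_eq hmem
  rcases lt_or_ge k q with hkq | hqk
  · have := h.nth_le k hk1 hkq
    have := nth_strictMonoOn (insert γ A) ⟨hk1, hkq.le.trans h.le_card_insert⟩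
      ⟨h.one_le, h.le_card_insert⟩ hkq
    omega
  · have := h.lt_nth (by have := h.card_eq; omega)
    have := (nth_strictMonoOn B).monotoneOn ⟨h.one_le, by omega⟩ ⟨hk1, hkB⟩ hqk
    omega

lemma galeLE_insert (h : IsLiftIndex A B γ q) (hdom : GaleLE B A) :
    GaleLE (insert (nth (insert γ A) q) B) (insert γ A) := by
  set α := nth (insert γ A) q
  intro a
  rcases lt_or_ge α a with hαa | haα
  · rw [card_filter_lt_insert_of_lt h.nth_notMem hαa]
    calc #{x ∈ insert γ A | x < a} ≤ #{x ∈ A | x < a} + 1 := by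
          rw [filter_insert]
          split_ifs
          exacts [card_insert_le _ _, Nat.le_succ _]
      _ ≤ #{x ∈ B | x < a} + 1 := Nat.add_le_add_right (hdom a) 1
  · rw [card_filter_lt_insert_of_le haα]
    set c := #{x ∈ insert γ A | x < a}
    have hcq : c < q := not_le.1 fun hle =>
      haα.not_gt ((nth_lt_iff h.one_le h.le_card_insert a).2 hle)
    rcases Nat.eq_zero_or_pos c with hc | hc
    · omega
    have hcB : c ≤ #B := by have := h.card_eq; have := h.le_card_succ; omega
    refine (nth_lt_iff hc hcB a).1 ((h.nth_le c hc hcq).trans_lt ?_)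
    exact (nth_lt_iff hc (card_filter_le _ _) a).2 le_rfl

lemma nth_lt_nth_of_lt (h : IsLiftIndex A B γ q) (hdom : GaleLE B A) {γ' q' : ℕ}
    (h' : IsLiftIndex (insert γ A) (insert (nth (insert γ A) q) B) γ' q') (hγ' : γ' < γ) :
    nth (insert γ' (insert γ A)) q' < nth (insert γ A) q := by
  set α := nth (insert γ A) q
  have hA : #{x ∈ insert γ' (insert γ A) | x < α} = q := by
    rw [card_filter_lt_insert_of_lt h'.notMem (hγ'.trans_le (h.le_nth hdom)),
      card_filter_lt_nth h.one_le h.le_card_insert]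
    have := h.one_le
    omega
  have hB : #{x ∈ insert α B | x < α} < q := by
    rw [card_filter_lt_insert_of_le le_rfl]
    exact h.card_filter_lt_nth_lt
  have hq'q : q' ≤ q := by
    by_contra! hqq'
    have hqA : q ≤ #(insert γ' (insert γ A)) :=
      h.le_card_insert.trans (card_le_card (subset_insert _ _))
    have hqB : q ≤ #(insert α B) := by
      rw [card_insert_of_notMem h.nth_notMem, h.card_eq]
      exact h.le_card_succ
    have hltα : nth (insert γ' (insert γ A)) q < α := (nth_lt_iff h.one_le hqA α).2 hA.ge
    have hαle : α ≤ nth (insert α B) q :=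
      not_lt.1 fun hlt => hB.not_ge ((nth_lt_iff h.one_le hqB α).1 hlt)
    have := h'.nth_le q h.one_le hqq'
    omega
  exact (nth_lt_iff h'.one_le h'.le_card_insert α).2 (hA ▸ hq'q)

end IsLiftIndex

lemma image_Icc_add_one (f : ℕ → ℕ) (j : ℕ) :
    (Icc 1 (j + 1)).image f = insert (f (j + 1)) ((Icc 1 j).image f) := by
  rw [← insert_Icc_right_eq_Icc_add_one (by omega), image_insert]

lemma card_image_Icc {w : ℕ → ℕ} {n j : ℕ} (hw : Set.InjOn w (Set.Icc 1 n)) (hj : j ≤ n) :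
    #((Icc 1 j).image w) = j := by
  rw [card_image_of_injOn (hw.mono (by simpa using Set.Icc_subset_Icc_right hj)), Nat.card_Icc]
  omega

lemma apply_add_one_notMem_image_Icc {w : ℕ → ℕ} {n j : ℕ} (hw : Set.InjOn w (Set.Icc 1 n))
    (hj : j + 1 ≤ n) : w (j + 1) ∉ (Icc 1 j).image w := by
  intro hmem
  obtain ⟨k, hk, hkj⟩ := mem_image.1 hmem
  rw [mem_Icc] at hk
  have := hw (Set.mem_Icc.2 ⟨hk.1, by omega⟩) (Set.mem_Icc.2 ⟨by omega, hj⟩) hkj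
  omega

section MaxLift

variable {p : ℕ} {w σ : ℕ → ℕ} {Y : Finset ℕ}

lemma image_Icc_eq_of_maxLift (hYc : #Y = p)
    (hσ1 : ∀ j, 1 ≤ j → j ≤ p →
      ((Y \ ((Icc 1 (j - 1)).image σ)).filter (fun y => y ≤ w j)).max = (σ j : WithBot ℕ)) :
    (Icc 1 p).image σ = Y := by
  have key : ∀ j ≤ p, (Icc 1 j).image σ ⊆ Y ∧ #((Icc 1 j).image σ) = j := by
    intro j
    induction j with
    | zero => simp
    | succ j ih =>
      intro hj
      obtain ⟨hsub, hcard⟩ := ih (by omega)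
      have hmem := mem_of_max (hσ1 (j + 1) (by omega) hj)
      simp only [Nat.add_sub_cancel, Nat.cast_id, mem_filter, mem_sdiff] at hmem
      rw [image_Icc_add_one]
      exact ⟨insert_subset hmem.1.1 hsub, by rw [card_insert_of_notMem hmem.1.2, hcard]⟩
  exact eq_of_subset_of_card_le (key p le_rfl).1 (by rw [(key p le_rfl).2, hYc])

lemma maxLift_lt_of_lt {i : ℕ} (hi : 1 ≤ i) (hip : i + 1 ≤ p)
    (hσ1 : ∀ j, 1 ≤ j → j ≤ p →
      ((Y \ ((Icc 1 (j - 1)).image σ)).filter (fun y => y ≤ w j)).max = (σ j : WithBot ℕ))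
    (hdesc : w (i + 1) < w i) : σ (i + 1) < σ i := by
  have hmem := mem_of_max (hσ1 (i + 1) (by omega) hip)
  simp only [Nat.add_sub_cancel, Nat.cast_id, mem_filter, mem_sdiff] at hmem
  have hne : σ (i + 1) ≠ σ i := fun heq =>
    hmem.1.2 (heq ▸ mem_image_of_mem σ (mem_Icc.2 ⟨hi, le_rfl⟩))
  have hfilter : σ (i + 1) ∈ (Y \ (Icc 1 (i - 1)).image σ).filter (fun y => y ≤ w i) := by
    refine mem_filter.2 ⟨mem_sdiff.2 ⟨hmem.1.1, fun h => hmem.1.2 ?_⟩, by omega⟩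
    exact image_subset_image (Icc_subset_Icc_right (by omega)) h
  exact lt_of_le_of_ne (le_max_of_eq hfilter (hσ1 i hi (by omega))) hne

end MaxLift

section Subroutine

variable {n p : ℕ} {w σ : ℕ → ℕ}

lemma exists_isLiftIndex (hw : Set.InjOn w (Set.Icc 1 n))
    (hσ2 : ∀ j, p < j → j ≤ n → ∃ q, 1 ≤ q ∧ q ≤ j ∧
      (q ≤ j - 1 →
        nth ((Icc 1 (j - 1)).image σ) q > nth ((Icc 1 j).image w) q) ∧
      (∀ r, 1 ≤ r → r < q →
        nth ((Icc 1 (j - 1)).image σ) r ≤ nth ((Icc 1 j).image w) r) ∧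
      σ j = nth ((Icc 1 j).image w) q)
    {j : ℕ} (hpj : p ≤ j) (hjn : j + 1 ≤ n) (hcard : #((Icc 1 j).image σ) = j) :
    ∃ q, IsLiftIndex ((Icc 1 j).image w) ((Icc 1 j).image σ) (w (j + 1)) q ∧
      σ (j + 1) = nth (insert (w (j + 1)) ((Icc 1 j).image w)) q := by
  obtain ⟨q, hq1, hq, hlt, hle, hσq⟩ := hσ2 (j + 1) (by omega) hjn
  simp only [Nat.add_sub_cancel, image_Icc_add_one w j] at hlt hle hσq
  have hA := card_image_Icc hw (j := j) (by omega)
  exact ⟨q, ⟨apply_add_one_notMem_image_Icc hw hjn, hcard.trans hA.symm, hq1, by omega,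
    fun h => hlt (by omega), hle⟩, hσq⟩

lemma card_image_Icc_eq_and_galeLE (hw : Set.InjOn w (Set.Icc 1 n)) {Y : Finset ℕ}
    (hYc : #Y = p) (hY : (Icc 1 p).image σ = Y) (hdom : Dom Y ((Icc 1 p).image w))
    (hσ2 : ∀ j, p < j → j ≤ n → ∃ q, 1 ≤ q ∧ q ≤ j ∧
      (q ≤ j - 1 →
        nth ((Icc 1 (j - 1)).image σ) q > nth ((Icc 1 j).image w) q) ∧
      (∀ r, 1 ≤ r → r < q →
        nth ((Icc 1 (j - 1)).image σ) r ≤ nth ((Icc 1 j).image w) r) ∧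
      σ j = nth ((Icc 1 j).image w) q)
    {j : ℕ} (hpj : p ≤ j) (hjn : j ≤ n) :
    #((Icc 1 j).image σ) = j ∧ GaleLE ((Icc 1 j).image σ) ((Icc 1 j).image w) := by
  induction j, hpj using Nat.le_induction with
  | base => exact hY ▸ ⟨hYc, hdom.galeLE⟩
  | succ j hpj ih =>
    obtain ⟨hcard, hgale⟩ := ih (by omega)
    obtain ⟨q, hq, hσq⟩ := exists_isLiftIndex hw hσ2 hpj hjn hcard
    rw [image_Icc_add_one σ, image_Icc_add_one w, hσq, card_insert_of_notMem hq.nth_notMem,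
      hcard]
    exact ⟨rfl, hq.galeLE_insert hgale⟩

end Subroutine

theorem stmt14_general (n p : ℕ) (w σ : ℕ → ℕ)
    (hw : Set.BijOn w (Set.Icc 1 n) (Set.Icc 1 n))
    (Y : Finset ℕ) (hYc : Y.card = p)
    -- Y ≤ {w_1,...,w_p}:
    (hdom : Dom Y ((Finset.Icc 1 p).image w))
    -- for j ≤ p, σ_j is the maximum element of Y \ {σ_1,...,σ_{j-1}} not exceeding w_j:
    (hσ1 : ∀ j, 1 ≤ j → j ≤ p →
      ((Y \ ((Finset.Icc 1 (j - 1)).image σ)).filter (fun y => y ≤ w j)).max = (σ j : WithBot ℕ))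
    -- for j > p, σ_j is the output of the subroutine with A = {w_1,...,w_{j-1}},
    -- B = {σ_1,...,σ_{j-1}}, γ = w_j (so that A ∪ {γ} = {w_1,...,w_j}):
    -- q is least in {1,...,j} with b̃_q > ã'_q (with b̃_j = ∞), and σ_j = ã'_q:
    (hσ2 : ∀ j, p < j → j ≤ n → ∃ q, 1 ≤ q ∧ q ≤ j ∧
      (q ≤ j - 1 →
        nth ((Finset.Icc 1 (j - 1)).image σ) q > nth ((Finset.Icc 1 j).image w) q) ∧
      (∀ r, 1 ≤ r → r < q →
        nth ((Finset.Icc 1 (j - 1)).image σ) r ≤ nth ((Finset.Icc 1 j).image w) r) ∧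
      σ j = nth ((Finset.Icc 1 j).image w) q) :
    ∀ i, 1 ≤ i → i + 1 ≤ n → i ≠ p → w i > w (i + 1) → σ i > σ (i + 1) := by
  intro i hi hin hip hdesc
  rcases hip.lt_or_gt with hlt | hgt
  · exact maxLift_lt_of_lt hi hlt hσ1 hdesc
  obtain ⟨m, rfl⟩ : ∃ m, i = m + 1 := ⟨i - 1, by omega⟩
  have hinj := hw.injOn
  have hinv := fun j (hpj : p ≤ j) (hjn : j ≤ n) => card_image_Icc_eq_and_galeLE hinj hYc
    (image_Icc_eq_of_maxLift hYc hσ1) hdom hσ2 hpj hjn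
  obtain ⟨hcard, hgale⟩ := hinv m (by omega) (by omega)
  obtain ⟨q, hq, hσq⟩ := exists_isLiftIndex hinj hσ2 (by omega) (by omega) hcard
  obtain ⟨q', hq', hσq'⟩ :=
    exists_isLiftIndex hinj hσ2 (by omega) hin (hinv (m + 1) (by omega) (by omega)).1
  rw [image_Icc_add_one w m] at hq' hσq'
  rw [image_Icc_add_one σ m, hσq] at hq'
  rw [hσq', hσq]
  exact hq.nth_lt_nth_of_lt hgale hq' hdesc

theorem stmt14 (n p : ℕ) (hp : p ≤ n) (w σ : ℕ → ℕ)
    (hw : Set.BijOn w (Set.Icc 1 n) (Set.Icc 1 n))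
    (Y : Finset ℕ) (hYs : Y ⊆ Finset.Icc 1 n) (hYc : Y.card = p)
    -- Y ≤ {w_1,...,w_p}:
    (hdom : Dom Y ((Finset.Icc 1 p).image w))
    -- for j ≤ p, σ_j is the maximum element of Y \ {σ_1,...,σ_{j-1}} not exceeding w_j:
    (hσ1 : ∀ j, 1 ≤ j → j ≤ p →
      ((Y \ ((Finset.Icc 1 (j - 1)).image σ)).filter (fun y => y ≤ w j)).max = (σ j : WithBot ℕ))
    -- for j > p, σ_j is the output of the subroutine with A = {w_1,...,w_{j-1}},
    -- B = {σ_1,...,σ_{j-1}}, γ = w_j (so that A ∪ {γ} = {w_1,...,w_j}):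
    -- q is least in {1,...,j} with b̃_q > ã'_q (with b̃_j = ∞), and σ_j = ã'_q:
    (hσ2 : ∀ j, p < j → j ≤ n → ∃ q, 1 ≤ q ∧ q ≤ j ∧
      (q ≤ j - 1 →
        nth ((Finset.Icc 1 (j - 1)).image σ) q > nth ((Finset.Icc 1 j).image w) q) ∧
      (∀ r, 1 ≤ r → r < q →
        nth ((Finset.Icc 1 (j - 1)).image σ) r ≤ nth ((Finset.Icc 1 j).image w) r) ∧
      σ j = nth ((Finset.Icc 1 j).image w) q) :
    ∀ i, 1 ≤ i → i + 1 ≤ n → i ≠ p → w i > w (i + 1) → σ i > σ (i + 1) :=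
  stmt14_general n p w σ hw Y hYc hdom hσ1 hσ2
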